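/- arXiv:2205.14706 — 3 statements merged into one kernel-verified Lean document; each statement's English description precedes it below -/
import Mathlib

section
/- Let R be a commutative ring in which 1 + 1 = 0, and let A, B, H be R-modules. Let d : A × B × H → A × B × H be the R-linear endomorphism given in block form by d(a,b,h) = (f a + g₁ b + m h, u a + g b + n h, p a + q b + l h), where f : A → A, g₁ : B → A, m : H → A, u : A → B, g : B → B, n : H → B, p : A → H, q : B → H, l : H → H are R-linear maps. Assume d ∘ d = 0 and that u is an invertible R-linear map (in the paper u = I + k where k is strictly lower-triangular with respect to an energy filtration). Set L = l + p ∘ u⁻¹ ∘ n : H → H. Then L ∘ L = 0 and there is an isomorphism of R-modules (ker d)/(range d) ≅ (ker L)/(range L). -/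
/-!
Write `v = u⁻¹` and `π (a, b, h) = h - p (v b)`. The `B`- and `H`-components of
`d (d (a, 0, 0)) = 0` make `π` a surjective chain map from `(A × B × H, d)` onto `(H, L)` with
`L = l - p ∘ v ∘ n`; hence `L ∘ L = 0`. The kernel of `π` is `{(a, u c, p c)} = A ⊕ d A`, an acyclic
subcomplex because `d` is injective on `A` (the `B`-component of `d (a, 0, 0)` is `u a`), and a
surjective chain map with acyclic kernel induces an isomorphism on homology. In characteristic
two, `l - p ∘ v ∘ n = l + p ∘ v ∘ n`.
-/

open LinearMap

namespace LinearMap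

variable {R M N : Type*} [Ring R] [AddCommGroup M] [AddCommGroup N] [Module R M] [Module R N]

abbrev homology (d : M →ₗ[R] M) : Type _ :=
  ker d ⧸ (range d).comap (ker d).subtype

variable {d : M →ₗ[R] M} {L : N →ₗ[R] N} {π : M →ₗ[R] N}

theorem comp_self_eq_zero_of_surjective (hπ : Function.Surjective π)
    (hcomm : π ∘ₗ d = L ∘ₗ π) (hdd : d ∘ₗ d = 0) : L ∘ₗ L = 0 := by
  ext y
  obtain ⟨x, rfl⟩ := hπ y
  have := congr(π ∘ₗ $hdd)
  rw [comp_zero, ← comp_assoc, hcomm, comp_assoc, hcomm, ← comp_assoc] at this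
  exact LinearMap.congr_fun this x

theorem apply_mem_ker_of_comp_eq (hcomm : π ∘ₗ d = L ∘ₗ π) {x : M} (hx : x ∈ ker d) :
    π x ∈ ker L := by
  rw [mem_ker, ← comp_apply L π, ← hcomm, comp_apply, hx, map_zero]

def kerToHomology (hcomm : π ∘ₗ d = L ∘ₗ π) : ker d →ₗ[R] homology L :=
  Submodule.mkQ _ ∘ₗ π.restrict fun _ => apply_mem_ker_of_comp_eq hcomm

theorem kerToHomology_apply (hcomm : π ∘ₗ d = L ∘ₗ π) (x : ker d) :
    kerToHomology hcomm x = Submodule.Quotient.mk ⟨π x, apply_mem_ker_of_comp_eq hcomm x.2⟩ :=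
  rfl

variable (hπ : Function.Surjective π) (hcomm : π ∘ₗ d = L ∘ₗ π) (hdd : d ∘ₗ d = 0)
  (hacyc : ker π ⊓ ker d ≤ (ker π).map d)
include hπ hcomm hdd hacyc

theorem kerToHomology_surjective : Function.Surjective (kerToHomology hcomm) := by
  rintro ⟨⟨y, hy⟩⟩
  obtain ⟨s, rfl⟩ := hπ y
  have hds : d s ∈ ker π ⊓ ker d := Submodule.mem_inf.mpr
    ⟨by rwa [mem_ker, ← comp_apply π d, hcomm], LinearMap.congr_fun hdd s⟩
  obtain ⟨t, ht, hdt⟩ := hacyc hds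
  refine ⟨⟨s - t, by rw [mem_ker, map_sub, hdt, sub_self]⟩, ?_⟩
  rw [kerToHomology_apply]
  congr 2
  rw [map_sub, mem_ker.mp ht, sub_zero]

theorem ker_kerToHomology :
    ker (kerToHomology hcomm) = (range d).comap (ker d).subtype := by
  ext ⟨x, hx⟩
  rw [mem_ker, kerToHomology_apply, Submodule.Quotient.mk_eq_zero, Submodule.mem_comap,
    Submodule.mem_comap, Submodule.subtype_apply, Submodule.subtype_apply]
  constructor
  · rintro ⟨h, hh⟩
    obtain ⟨s, rfl⟩ := hπ h
    have hxs : x - d s ∈ ker π ⊓ ker d := by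
      refine Submodule.mem_inf.mpr ⟨?_, ?_⟩
      · rw [mem_ker, map_sub, ← comp_apply π d, hcomm, comp_apply, hh, sub_self]
      · rw [mem_ker, map_sub, mem_ker.mp hx, ← comp_apply d d, hdd, LinearMap.zero_apply,
          sub_zero]
    obtain ⟨t, -, ht⟩ := hacyc hxs
    exact ⟨t + s, by rw [map_add, ht, sub_add_cancel]⟩
  · rintro ⟨s, rfl⟩
    exact ⟨π s, by rw [← comp_apply L π, ← hcomm, comp_apply]⟩

noncomputable def homologyEquivOfAcyclicKer : homology d ≃ₗ[R] homology L :=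
  (Submodule.quotEquivOfEq _ _ (ker_kerToHomology hπ hcomm hdd hacyc).symm).trans
    ((kerToHomology hcomm).quotKerEquivOfSurjective
      (kerToHomology_surjective hπ hcomm hdd hacyc))

end LinearMap

section BlockComplex

variable {R A B H : Type*} [Ring R] [AddCommGroup A] [AddCommGroup B] [AddCommGroup H]
  [Module R A] [Module R B] [Module R H]

def cancellationProj (p : A →ₗ[R] H) (e : A ≃ₗ[R] B) : A × B × H →ₗ[R] H :=
  snd R B H ∘ₗ snd R A (B × H) - p ∘ₗ e.symm.toLinearMap ∘ₗ fst R B H ∘ₗ snd R A (B × H)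

@[simp]
theorem cancellationProj_apply (p : A →ₗ[R] H) (e : A ≃ₗ[R] B) (a : A) (b : B) (h : H) :
    cancellationProj p e (a, b, h) = h - p (e.symm b) :=
  rfl

theorem cancellationProj_surjective (p : A →ₗ[R] H) (e : A ≃ₗ[R] B) :
    Function.Surjective (cancellationProj p e) :=
  fun h => ⟨(0, 0, h), by simp⟩

variable {f : A →ₗ[R] A} {g₁ : B →ₗ[R] A} {m : H →ₗ[R] A} {e : A ≃ₗ[R] B} {g : B →ₗ[R] B}
  {n : H →ₗ[R] B} {p : A →ₗ[R] H} {q : B →ₗ[R] H} {l : H →ₗ[R] H}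
  {d : (A × B × H) →ₗ[R] (A × B × H)}
  (hd : ∀ a b h, d (a, b, h) = (f a + g₁ b + m h, e a + g b + n h, p a + q b + l h))
  (hdd : d ∘ₗ d = 0)
include hd

theorem sub_apply_inl_eq (x : A × B × H) :
    x - d (e.symm x.2.1, 0, 0) = (x.1 - f (e.symm x.2.1), 0, cancellationProj p e x) := by
  obtain ⟨a, b, h⟩ := x
  simp [hd]

theorem eq_zero_of_apply_inl_eq_zero {a : A} (ha : d (a, 0, 0) = 0) : a = 0 := by
  simpa [hd] using congrArg (fun y => y.2.1) ha

include hdd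

theorem inl_relations (a : A) :
    n (p a) = -(e (f a) + g (e a)) ∧ l (p a) = -(p (f a) + q (e a)) := by
  have := LinearMap.congr_fun hdd (a, 0, 0)
  simp only [comp_apply, hd, map_zero, add_zero, LinearMap.zero_apply, Prod.mk_eq_zero] at this
  exact ⟨eq_neg_of_add_eq_zero_right this.2.1, eq_neg_of_add_eq_zero_right this.2.2⟩

theorem cancellationProj_comp :
    cancellationProj p e ∘ₗ d = (l - p ∘ₗ e.symm.toLinearMap ∘ₗ n) ∘ₗ cancellationProj p e := by
  refine LinearMap.ext fun ⟨a, b, h⟩ => ?_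
  obtain ⟨c, rfl⟩ := e.surjective b
  obtain ⟨hnp, hlp⟩ := inl_relations hd hdd c
  simp only [coe_comp, Function.comp_apply, hd, cancellationProj_apply, map_add,
    LinearEquiv.symm_apply_apply, LinearMap.sub_apply, map_sub, LinearEquiv.coe_coe, hnp, hlp,
    map_neg]
  abel

theorem ker_cancellationProj_inf_ker_le :
    ker (cancellationProj p e) ⊓ ker d ≤ (ker (cancellationProj p e)).map d := by
  rintro x ⟨hπx, hdx⟩
  have hx := sub_apply_inl_eq hd x
  rw [show cancellationProj p e x = 0 from hπx] at hx
  have hdx' : d (x.1 - f (e.symm x.2.1), 0, 0) = 0 := by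
    rw [← hx, map_sub, mem_ker.mp hdx, ← comp_apply d d, hdd, LinearMap.zero_apply, sub_zero]
  refine ⟨(e.symm x.2.1, 0, 0), by simp, ?_⟩
  rw [eq_zero_of_apply_inl_eq_zero hd hdx'] at hx
  exact (sub_eq_zero.mp hx).symm

end BlockComplex

theorem add_self_eq_zero_of_one_add_one_eq_zero {R M : Type*} [Semiring R] [AddCommMonoid M]
    [Module R M] (hchar : (1 : R) + 1 = 0) (x : M) : x + x = 0 := by
  rw [← one_smul R x, ← add_smul, hchar, zero_smul]

/-- Lemma 3.1 of the paper (Lemma `HF`): if `d` on `A × B × H` has block form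
`d(a,b,h) = (f a + g₁ b + m h, u a + g b + n h, p a + q b + l h)` with `d ∘ d = 0`
and `u` an invertible `R`-linear map, then `L = l + p ∘ u⁻¹ ∘ n` squares to zero and
the homology `ker d / range d` is isomorphic to `ker L / range L`. -/
theorem stmt0 {R : Type*} [CommRing R] (hchar : (1 : R) + 1 = 0)
    {A B H : Type*} [AddCommGroup A] [AddCommGroup B] [AddCommGroup H]
    [Module R A] [Module R B] [Module R H]
    (f : A →ₗ[R] A) (g₁ : B →ₗ[R] A) (m : H →ₗ[R] A)
    (u : A →ₗ[R] B) (g : B →ₗ[R] B) (n : H →ₗ[R] B)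
    (p : A →ₗ[R] H) (q : B →ₗ[R] H) (l : H →ₗ[R] H)
    (d : (A × B × H) →ₗ[R] (A × B × H))
    (hd : ∀ a b h, d (a, b, h) = (f a + g₁ b + m h, u a + g b + n h, p a + q b + l h))
    (hdd : d.comp d = 0)
    (e : A ≃ₗ[R] B) (hu : (e : A →ₗ[R] B) = u) :
    (l + p.comp ((e.symm : B →ₗ[R] A).comp n)).comp
        (l + p.comp ((e.symm : B →ₗ[R] A).comp n)) = 0 ∧
    Nonempty
      ((LinearMap.ker d ⧸ (LinearMap.range d).comap (LinearMap.ker d).subtype) ≃ₗ[R]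
        (LinearMap.ker (l + p.comp ((e.symm : B →ₗ[R] A).comp n)) ⧸
          (LinearMap.range (l + p.comp ((e.symm : B →ₗ[R] A).comp n))).comap
            (LinearMap.ker (l + p.comp ((e.symm : B →ₗ[R] A).comp n))).subtype)) := by
  subst hu
  have hL : l + p.comp ((e.symm : B →ₗ[R] A).comp n) = l - p ∘ₗ e.symm.toLinearMap ∘ₗ n := by
    rw [sub_eq_add_neg,
      neg_eq_of_add_eq_zero_left (add_self_eq_zero_of_one_add_one_eq_zero hchar _)]
  have hcomm := cancellationProj_comp hd hdd
  rw [hL]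
  exact ⟨comp_self_eq_zero_of_surjective (cancellationProj_surjective p e) hcomm hdd,
    ⟨homologyEquivOfAcyclicKer (cancellationProj_surjective p e) hcomm hdd
      (ker_cancellationProj_inf_ker_le hd hdd)⟩⟩
end

section
/- Let R be a commutative ring that is an integral domain, and let a ∈ R be a nonzero element that is not a unit. Let L be a 4 × 4 matrix with entries in R such that: L · L = 0; every entry in the first row of L is zero (L₀ⱼ = 0 for all j); and the first column of L is (0, a, 0, 0)ᵀ (i.e. L₁₀ = a and L₂₀ = L₃₀ = 0), while the remaining entries are arbitrary. Then, for the R-linear map v ↦ L·v on R⁴, the kernel of L is not equal to the range of L; in particular, since L·L = 0 implies range L ⊆ ker L, the homology (ker L)/(range L) is a nonzero R-module. -/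
/-- The concluding step of Section 6 of the paper: over an integral domain `R`, a `4 × 4`
matrix `L` with `L² = 0`, vanishing first row, and first column `(0, a, 0, 0)ᵀ` for a
nonzero non-unit `a` has nontrivial homology, i.e. `ker L ≠ range L`. -/
theorem stmt5 {R : Type*} [CommRing R] [IsDomain R]
    (a : R) (ha : a ≠ 0) (hna : ¬ IsUnit a)
    (L : Matrix (Fin 4) (Fin 4) R) (hLL : L * L = 0)
    (hrow : ∀ j, L 0 j = 0)
    (hcol1 : L 1 0 = a) (hcol2 : L 2 0 = 0) (hcol3 : L 3 0 = 0) :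
    LinearMap.ker L.mulVecLin ≠ LinearMap.range L.mulVecLin := by
  intro h
  have key : ∀ i j : Fin 4,
      L i 0 * L 0 j + L i 1 * L 1 j + L i 2 * L 2 j + L i 3 * L 3 j = 0 := by
    intro i j
    have := congrFun (congrFun hLL i) j
    simpa [Matrix.mul_apply, Fin.sum_univ_four] using this
  -- column 1 vanishes
  have hc1 : ∀ i, L i 1 = 0 := by
    intro i
    have hk := key i 0
    rw [hrow 0, hcol1, hcol2, hcol3] at hk
    have h' : L i 1 * a = 0 := by linear_combination hk
    rcases mul_eq_zero.mp h' with h' | h'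
    · exact h'
    · exact absurd h' ha
  set b2 := L 1 2 with hb2
  set b3 := L 1 3 with hb3
  set c := L 2 2 with hc
  set c3 := L 2 3 with hc3'
  set d2 := L 3 2 with hd2'
  set d3 := L 3 3 with hd3'
  have r22 : c * c + c3 * d2 = 0 := by
    have := key 2 2; rw [hrow 2, hc1 2] at this; linear_combination this
  have r23 : c * c3 + c3 * d3 = 0 := by
    have := key 2 3; rw [hrow 3, hc1 2] at this; linear_combination this
  have r32 : d2 * c + d3 * d2 = 0 := by
    have := key 3 2; rw [hrow 2, hc1 3] at this; linear_combination this
  have r33 : d2 * c3 + d3 * d3 = 0 := by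
    have := key 3 3; rw [hrow 3, hc1 3] at this; linear_combination this
  have r12 : b2 * c + b3 * d2 = 0 := by
    have := key 1 2; rw [hrow 2, hc1 1] at this; linear_combination this
  have r13 : b2 * c3 + b3 * d3 = 0 := by
    have := key 1 3; rw [hrow 3, hc1 1] at this; linear_combination this
  -- e₁ is in the kernel, hence in the range
  have he1 : (![0,1,0,0] : Fin 4 → R) ∈ LinearMap.ker L.mulVecLin := by
    rw [LinearMap.mem_ker]
    funext i
    fin_cases i <;>
      simp [Matrix.mulVecLin_apply, Matrix.mulVec, dotProduct, Fin.sum_univ_four, hc1]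
  rw [h, LinearMap.mem_range] at he1
  obtain ⟨x, hx⟩ := he1
  have hx1 : a * x 0 + b2 * x 2 + b3 * x 3 = 1 := by
    have := congrFun hx 1
    simp [Matrix.mulVecLin_apply, Matrix.mulVec, dotProduct, Fin.sum_univ_four,
      hcol1, hc1 1, ← hb2, ← hb3] at this
    linear_combination this
  have hx2 : c * x 2 + c3 * x 3 = 0 := by
    have := congrFun hx 2
    simp [Matrix.mulVecLin_apply, Matrix.mulVec, dotProduct, Fin.sum_univ_four,
      hcol2, hc1 2, ← hc, ← hc3'] at this
    linear_combination this
  have hx3 : d2 * x 2 + d3 * x 3 = 0 := by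
    have := congrFun hx 3
    simp [Matrix.mulVecLin_apply, Matrix.mulVec, dotProduct, Fin.sum_univ_four,
      hcol3, hc1 3, ← hd2', ← hd3'] at this
    linear_combination this
  -- trace of the lower 2x2 block is zero
  have htr : c + d3 = 0 := by
    by_contra ht
    have h1 : c3 = 0 := by
      have h' : c3 * (c + d3) = 0 := by linear_combination r23
      rcases mul_eq_zero.mp h' with h' | h'
      · exact h'
      · exact absurd h' ht
    have h2 : d2 = 0 := by
      have h' : d2 * (c + d3) = 0 := by linear_combination r32
      rcases mul_eq_zero.mp h' with h' | h'
      · exact h'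
      · exact absurd h' ht
    have h3 : c = 0 := by
      have h' : c * c = 0 := by linear_combination r22 - d2 * h1
      exact mul_self_eq_zero.mp h'
    have h4 : d3 = 0 := by
      have h' : d3 * d3 = 0 := by linear_combination r33 - c3 * h2
      exact mul_self_eq_zero.mp h'
    exact ht (by rw [h3, h4]; ring)
  -- from a nonzero multiplier m with m * S = 0, conclude a is a unit: contradiction
  have finish : ∀ m : R, m ≠ 0 → m * (b2 * x 2 + b3 * x 3) = 0 → False := by
    intro m hm hmS
    rcases mul_eq_zero.mp hmS with h' | h'
    · exact absurd h' hm
    · exact hna (IsUnit.of_mul_eq_one (a := a) (x 0) (by linear_combination hx1 - h'))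
  by_cases hcz : c = 0
  · by_cases hc3z : c3 = 0
    · by_cases hd2z : d2 = 0
      · -- lower block vanishes: the kernel vector (b2, 0, -a, 0) must be in the range
        have mv : ∀ (w : Fin 4 → R) (i : Fin 4),
            L.mulVecLin w i = L i 0 * w 0 + L i 1 * w 1 + L i 2 * w 2 + L i 3 * w 3 := by
          intro w i
          simp [Matrix.mulVecLin_apply, Matrix.mulVec, dotProduct, Fin.sum_univ_four]
        have hwker : (![b2, 0, -a, 0] : Fin 4 → R) ∈ LinearMap.ker L.mulVecLin := by
          rw [LinearMap.mem_ker]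
          funext i
          fin_cases i
          · show L.mulVecLin ![b2, 0, -a, 0] (0 : Fin 4) = 0
            rw [mv]
            simp only [Matrix.cons_val_zero, Matrix.cons_val_one, Matrix.head_cons,
              Matrix.cons_val_two, Matrix.tail_cons, Matrix.cons_val_three]
            linear_combination b2 * hrow 0 - a * hrow 2
          · show L.mulVecLin ![b2, 0, -a, 0] (1 : Fin 4) = 0
            rw [mv]
            simp only [Matrix.cons_val_zero, Matrix.cons_val_one, Matrix.head_cons,
              Matrix.cons_val_two, Matrix.tail_cons, Matrix.cons_val_three]
            linear_combination b2 * hcol1 + a * hb2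
          · show L.mulVecLin ![b2, 0, -a, 0] (2 : Fin 4) = 0
            rw [mv]
            simp only [Matrix.cons_val_zero, Matrix.cons_val_one, Matrix.head_cons,
              Matrix.cons_val_two, Matrix.tail_cons, Matrix.cons_val_three]
            linear_combination b2 * hcol2 - a * hcz + a * hc
          · show L.mulVecLin ![b2, 0, -a, 0] (3 : Fin 4) = 0
            rw [mv]
            simp only [Matrix.cons_val_zero, Matrix.cons_val_one, Matrix.head_cons,
              Matrix.cons_val_two, Matrix.tail_cons, Matrix.cons_val_three]
            linear_combination b2 * hcol3 - a * hd2z + a * hd2'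
        rw [h, LinearMap.mem_range] at hwker
        obtain ⟨v, hv⟩ := hwker
        have h2' := congrFun hv 2
        simp [Matrix.mulVecLin_apply, Matrix.mulVec, dotProduct,
          Fin.sum_univ_four, hcol2, hc1 2, ← hc, ← hc3'] at h2'
        exact ha (by linear_combination h2' - v 2 * hcz - v 3 * hc3z)
      · exact finish d2 hd2z (by
          linear_combination b2 * hx3 - b2 * x 3 * htr + x 3 * r12)
    · exact finish c3 hc3z (by
        linear_combination b3 * hx2 + x 2 * r13 - b3 * x 2 * htr)
  · exact finish c hcz (by
      linear_combination b2 * hx2 - x 3 * r13 + b3 * x 3 * htr)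
end

section
/- Let R be a commutative ring in which 1 + 1 = 0, and let A, H be R-modules. Let d : A × A × H → A × A × H be an R-linear endomorphism given in block form by d(a,b,h) = (f a + g₁ b + m h, u a + g b + n h, p a + q b + l h), with all blocks R-linear and u : A → A invertible. If d ∘ d = 0, then the conjugated endomorphism d̃ = S ∘ d ∘ S⁻¹, where S(a,b,h) = (u a + (u ∘ f ∘ u⁻¹) b, b, h) and S⁻¹(a,b,h) = (u⁻¹ a + (f ∘ u⁻¹) b, b, h), has block form d̃(a,b,h) = (m'∘A₀ b + m' h, a + (n ∘ A₀) b + n h, A₀ a + (l ∘ A₀) b + l h) with vanishing (1,1)-block, where A₀ = p ∘ u⁻¹ : A → H and m' = u ∘ m + u ∘ f ∘ u⁻¹ ∘ n : H → A. -/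
/-! Write `a = u v` and `b = u w`. The entries of the first block column of `d ∘ d = 0` at `w`,
together with `2 = 0`, give the three components of `S ∘ d ∘ T`; the middle one is computed
first, because the first row of `S` reads it. -/

theorem LinearMap.comp_self_eq_zero_first_column {R A B H : Type*} [Semiring R]
    [AddCommMonoid A] [AddCommMonoid B] [AddCommMonoid H] [Module R A] [Module R B] [Module R H]
    {f : A →ₗ[R] A} {g₁ : B →ₗ[R] A} {m : H →ₗ[R] A} {u : A →ₗ[R] B} {g : B →ₗ[R] B}
    {n : H →ₗ[R] B} {p : A →ₗ[R] H} {q : B →ₗ[R] H} {l : H →ₗ[R] H}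
    {d : (A × B × H) →ₗ[R] (A × B × H)}
    (hd : ∀ a b h, d (a, b, h) = (f a + g₁ b + m h, u a + g b + n h, p a + q b + l h))
    (hdd : d.comp d = 0) (x : A) :
    f (f x) + g₁ (u x) + m (p x) = 0 ∧ u (f x) + g (u x) + n (p x) = 0 ∧
      p (f x) + q (u x) + l (p x) = 0 := by
  simpa [hd] using LinearMap.congr_fun hdd (x, 0, 0)

/-- The first base change in the proof of Lemma 3.1 of the paper (characteristic 2):
conjugating the square-zero differential `d(a,b,h) = (f a + g₁ b + m h, u a + g b + n h,
p a + q b + l h)` (with `u` invertible) by `S(a,b,h) = (u a + (u∘f∘u⁻¹) b, b, h)`,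
with inverse `S⁻¹(a,b,h) = (u⁻¹ a + (f∘u⁻¹) b, b, h)`, yields the block form
`[[0, m'∘A₀, m'], [I, n∘A₀, n], [A₀, l∘A₀, l]]` where `A₀ = p ∘ u⁻¹` and
`m' = u∘m + u∘f∘u⁻¹∘n`. -/
theorem stmt8 {R : Type*} [CommRing R] (hchar : (1 : R) + 1 = 0)
    {A H : Type*} [AddCommGroup A] [AddCommGroup H] [Module R A] [Module R H]
    (f g₁ g : A →ₗ[R] A) (m n : H →ₗ[R] A) (u : A →ₗ[R] A)
    (p q : A →ₗ[R] H) (l : H →ₗ[R] H)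
    (e : A ≃ₗ[R] A) (hu : (e : A →ₗ[R] A) = u)
    (d : (A × A × H) →ₗ[R] (A × A × H))
    (hd : ∀ a b h, d (a, b, h) = (f a + g₁ b + m h, u a + g b + n h, p a + q b + l h))
    (hdd : d.comp d = 0)
    (S T : (A × A × H) →ₗ[R] (A × A × H))
    (hS : ∀ a b h, S (a, b, h) = (u a + u (f (e.symm b)), b, h))
    (hT : ∀ a b h, T (a, b, h) = (e.symm a + f (e.symm b), b, h)) :
    ∀ a b h, (S.comp (d.comp T)) (a, b, h) =
      ((u (m (p (e.symm b))) + u (f (e.symm (n (p (e.symm b)))))) +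
          (u (m h) + u (f (e.symm (n h)))),
        a + n (p (e.symm b)) + n h,
        p (e.symm a) + l (p (e.symm b)) + l h) := by
  subst hu
  intro a b h
  obtain ⟨v, rfl⟩ := e.surjective a
  obtain ⟨w, rfl⟩ := e.surjective b
  obtain ⟨h₁₁, h₂₁, h₃₁⟩ := LinearMap.comp_self_eq_zero_first_column hd hdd w
  simp only [LinearEquiv.coe_coe] at hd hS h₁₁ h₂₁ h₃₁
  have hmid : e v + e (f w) + g (e w) + n h = e v + n (p w) + n h := by
    linear_combination (norm := module) h₂₁ - hchar • n (p w)
  have he₁₁ : e (f (f w)) + e (g₁ (e w)) + e (m (p w)) = 0 := by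
    simpa only [map_add, map_zero] using congr_arg e h₁₁
  simp only [LinearMap.comp_apply, hT, hd, hS, hmid, map_add, LinearEquiv.coe_coe,
    LinearEquiv.symm_apply_apply, Prod.mk.injEq, true_and]
  constructor
  · linear_combination (norm := module) he₁₁ + hchar • (e (f v) - e (m (p w)))
  · linear_combination (norm := module) h₃₁ - hchar • l (p w)
end
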